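/- Let (V,E,μ) be an infinite, connected, locally finite weighted graph and 1 < p < ∞. Let Ω ⊆ V be finite and y ∈ Ω. If g and h are two functions V → ℝ each satisfying the Dirichlet system g(x)=0 for x ∉ Ω, −Δ_p g(x)=0 for x ∈ Ω∖{y}, and −Δ_p g(y)=μ(y)^{−1}, then g = h. -/
import Mathlib

open scoped BigOperators ENNReal

/-- `Φ_p(t) = |t|^{p-2} t`. -/
noncomputable def Phi (p t : ℝ) : ℝ := |t| ^ (p - 2) * t

/-- Vertex measure `μ(x) = ∑_{y ~ x} μ_{xy}`. -/
noncomputable def vMeas {V : Type*} (G : SimpleGraph V) (w : V → V → ℝ) (x : V) : ℝ :=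
  ∑ᶠ y ∈ {y | G.Adj x y}, w x y

/-- The `p`-Laplacian `Δ_p u(x) = μ(x)⁻¹ ∑_{y ~ x} μ_{xy} Φ_p(u(y) - u(x))`. -/
noncomputable def pLap {V : Type*} (G : SimpleGraph V) (w : V → V → ℝ) (p : ℝ)
    (u : V → ℝ) (x : V) : ℝ :=
  (vMeas G w x)⁻¹ * ∑ᶠ y ∈ {y | G.Adj x y}, w x y * Phi p (u y - u x)

/-- `g` is a local `p`-Green function of `Ω` with pole at `y`. -/
def IsGreen {V : Type*} (G : SimpleGraph V) (w : V → V → ℝ) (p : ℝ)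
    (Ω : Set V) (y : V) (g : V → ℝ) : Prop :=
  (∀ x ∉ Ω, g x = 0) ∧ (∀ x ∈ Ω, x ≠ y → -pLap G w p g x = 0) ∧
    -pLap G w p g y = (vMeas G w y)⁻¹

lemma phi_pos {p t : ℝ} (ht : 0 < t) : Phi p t = t ^ (p - 1) := by
  rw [Phi, abs_of_pos ht]
  rw [show t ^ (p-2) * t = t ^ (p-2) * t ^ (1:ℝ) by rw [Real.rpow_one],
    ← Real.rpow_add ht]
  ring_nf

lemma phi_neg {p t : ℝ} : Phi p (-t) = - Phi p t := by
  simp [Phi, abs_neg]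

lemma phi_zero {p : ℝ} : Phi p 0 = 0 := by simp [Phi]

lemma phi_strictMono {p : ℝ} (hp : 1 < p) : StrictMono (Phi p) := by
  have hpos : ∀ t : ℝ, 0 < t → 0 < Phi p t := fun t ht => by
    rw [phi_pos ht]; exact Real.rpow_pos_of_pos ht _
  intro s t hst
  rcases lt_trichotomy s 0 with hs | hs | hs
  · have hps : Phi p s < 0 := by
      have := hpos (-s) (by linarith)
      rw [phi_neg] at this; linarith
    rcases lt_trichotomy t 0 with ht | ht | ht
    · have : Phi p (-t) < Phi p (-s) := by
        rw [phi_pos (show (0:ℝ) < -t by linarith), phi_pos (show (0:ℝ) < -s by linarith)]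
        exact Real.rpow_lt_rpow (by linarith) (by linarith) (by linarith)
      rw [phi_neg, phi_neg] at this; linarith
    · rw [ht, phi_zero]; exact hps
    · exact lt_trans hps (hpos t ht)
  · rw [hs, phi_zero]; exact hpos t (hs ▸ hst)
  · rw [phi_pos hs, phi_pos (lt_trans hs hst)]
    exact Real.rpow_lt_rpow (le_of_lt hs) hst (by linarith)

lemma phi_mono_prod_nonneg {p a b : ℝ} (hp : 1 < p) :
    0 ≤ (Phi p a - Phi p b) * (a - b) := by
  rcases lt_trichotomy a b with hab | rfl | hab
  · have := phi_strictMono hp hab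
    nlinarith
  · simp
  · have := phi_strictMono hp hab
    nlinarith

lemma phi_mono_prod_pos {p a b : ℝ} (hp : 1 < p) (hab : a ≠ b) :
    0 < (Phi p a - Phi p b) * (a - b) := by
  rcases lt_or_gt_of_ne hab with hab' | hab'
  · have := phi_strictMono hp hab'
    apply mul_pos_of_neg_of_neg <;> linarith
  · have := phi_strictMono hp hab'
    apply mul_pos <;> linarith

/-- Uniqueness of the local `p`-Green function: two solutions of the Dirichlet system on
a finite set `Ω` with pole `y ∈ Ω` coincide. -/
theorem stmt14 {V : Type*} [Infinite V] (G : SimpleGraph V)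
    (hconn : G.Connected) (hlf : ∀ x : V, {y | G.Adj x y}.Finite)
    (w : V → V → ℝ) (hwsymm : ∀ x y, w x y = w y x)
    (hwpos : ∀ x y, G.Adj x y → 0 < w x y)
    (p : ℝ) (hp : 1 < p)
    (Ω : Set V) (hΩ : Ω.Finite) (y : V) (hy : y ∈ Ω)
    (g h : V → ℝ) (hg : IsGreen G w p Ω y g) (hh : IsGreen G w p Ω y h) :
    g = h := by
  classical
  set f : V → ℝ := fun x => g x - h x with hf
  -- every vertex has a neighbor
  have hnbr : ∀ x : V, ∃ z, G.Adj x z := by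
    intro x
    obtain ⟨z, hz⟩ := exists_ne x
    obtain ⟨wk⟩ := hconn.preconnected x z
    cases wk with
    | nil => exact absurd rfl hz.symm
    | cons ha _ => exact ⟨_, ha⟩
  have hvpos : ∀ x : V, 0 < vMeas G w x := by
    intro x
    obtain ⟨z, hz⟩ := hnbr x
    rw [vMeas, finsum_mem_eq_finite_toFinset_sum _ (hlf x)]
    apply Finset.sum_pos
    · intro i hi
      exact hwpos x i (by simpa using hi)
    · exact ⟨z, by simpa using hz⟩
  -- the two weighted sums agree on Ω
  have key0 : ∀ x ∈ Ω,
      ∑ z ∈ (hlf x).toFinset, w x z * Phi p (g z - g x)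
        = ∑ z ∈ (hlf x).toFinset, w x z * Phi p (h z - h x) := by
    intro x hx
    have hne : vMeas G w x ≠ 0 := (hvpos x).ne'
    have heq : pLap G w p g x = pLap G w p h x := by
      rcases eq_or_ne x y with rfl | hxy
      · have h1 := hg.2.2; have h2 := hh.2.2; linarith
      · have h1 := hg.2.1 x hx hxy; have h2 := hh.2.1 x hx hxy; linarith
    rw [pLap, pLap] at heq
    have h2 := mul_left_cancel₀ (inv_ne_zero hne) heq
    rwa [finsum_mem_eq_finite_toFinset_sum _ (hlf x),
      finsum_mem_eq_finite_toFinset_sum _ (hlf x)] at h2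
  -- the big finite set
  set s : Finset V := hΩ.toFinset ∪ hΩ.toFinset.biUnion (fun x => (hlf x).toFinset) with hsdef
  have hmemΩ : ∀ x ∈ Ω, x ∈ s := fun x hx =>
    Finset.mem_union.2 (Or.inl (hΩ.mem_toFinset.2 hx))
  have hmemN : ∀ x ∈ Ω, ∀ z, G.Adj x z → z ∈ s := fun x hx z hz =>
    Finset.mem_union.2 (Or.inr (Finset.mem_biUnion.2
      ⟨x, hΩ.mem_toFinset.2 hx, (hlf x).mem_toFinset.2 hz⟩))
  set e : V → V → ℝ := fun x z =>
    if G.Adj x z ∧ (x ∈ Ω ∨ z ∈ Ω) then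
      w x z * (Phi p (g z - g x) - Phi p (h z - h x)) else 0 with he
  have hanti : ∀ x z, e z x = - e x z := by
    intro x z
    simp only [he]
    by_cases hcond : G.Adj x z ∧ (x ∈ Ω ∨ z ∈ Ω)
    · rw [if_pos ⟨hcond.1.symm, hcond.2.symm⟩, if_pos hcond, hwsymm]
      rw [show g x - g z = -(g z - g x) by ring, phi_neg,
        show h x - h z = -(h z - h x) by ring, phi_neg]
      ring
    · rw [if_neg hcond, if_neg, neg_zero]
      intro hc
      exact hcond ⟨hc.1.symm, hc.2.symm⟩
  have hA : ∀ x ∈ s, (∑ z ∈ s, e x z) * f x = 0 := by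
    intro x hx
    by_cases hxΩ : x ∈ Ω
    · have hsum : ∑ z ∈ s, e x z = 0 := by
        have hfe : ∀ z, e x z = if G.Adj x z then
            w x z * (Phi p (g z - g x) - Phi p (h z - h x)) else 0 := by
          intro z
          simp only [he]
          by_cases hadj : G.Adj x z
          · rw [if_pos ⟨hadj, Or.inl hxΩ⟩, if_pos hadj]
          · rw [if_neg (fun hc => hadj hc.1), if_neg hadj]
        simp only [hfe]
        rw [← Finset.sum_filter]
        have hfs : s.filter (fun z => G.Adj x z) = (hlf x).toFinset := by
          ext z
          simp only [Finset.mem_filter, Set.Finite.mem_toFinset, Set.mem_setOf_eq]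
          exact ⟨fun hz => hz.2, fun hz => ⟨hmemN x hxΩ z hz, hz⟩⟩
        rw [hfs]
        simp only [mul_sub]
        rw [Finset.sum_sub_distrib, key0 x hxΩ, sub_self]
      rw [hsum, zero_mul]
    · have : f x = 0 := by simp [hf, hg.1 x hxΩ, hh.1 x hxΩ]
      rw [this, mul_zero]
  have hA0 : ∑ x ∈ s, ∑ z ∈ s, e x z * f x = 0 := by
    refine Finset.sum_eq_zero fun x hx => ?_
    rw [← Finset.sum_mul]
    exact hA x hx
  have hB0 : ∑ x ∈ s, ∑ z ∈ s, e x z * f z = 0 := by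
    rw [Finset.sum_comm]
    refine Finset.sum_eq_zero fun z hz => ?_
    have h1 : ∀ x ∈ s, e x z * f z = -(e z x * f z) := fun x _ => by
      rw [hanti x z]; ring
    rw [Finset.sum_congr rfl h1, Finset.sum_neg_distrib, ← Finset.sum_mul,
      hA z hz, neg_zero]
  have hC : ∑ x ∈ s, ∑ z ∈ s, e x z * (f z - f x) = 0 := by
    simp only [mul_sub, Finset.sum_sub_distrib]
    rw [hA0, hB0, sub_zero]
  have hterm_nonneg : ∀ x z, 0 ≤ e x z * (f z - f x) := by
    intro x z
    simp only [he]
    by_cases hcond : G.Adj x z ∧ (x ∈ Ω ∨ z ∈ Ω)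
    · rw [if_pos hcond]
      have hab : f z - f x = (g z - g x) - (h z - h x) := by simp [hf]; ring
      rw [hab, mul_assoc]
      exact mul_nonneg (hwpos x z hcond.1).le (phi_mono_prod_nonneg hp)
    · rw [if_neg hcond, zero_mul]
  have hzero : ∀ x ∈ s, ∀ z ∈ s, e x z * (f z - f x) = 0 := by
    have h1 := (Finset.sum_eq_zero_iff_of_nonneg
      (fun x _ => Finset.sum_nonneg fun z _ => hterm_nonneg x z)).1 hC
    intro x hx z hz
    exact (Finset.sum_eq_zero_iff_of_nonneg fun z _ => hterm_nonneg x z).1 (h1 x hx) z hz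
  have hedge : ∀ x z, G.Adj x z → (x ∈ Ω ∨ z ∈ Ω) → f x = f z := by
    intro x z hadj hin
    have hxs : x ∈ s := by
      rcases hin with h' | h'
      · exact hmemΩ x h'
      · exact hmemN z h' x hadj.symm
    have hzs : z ∈ s := by
      rcases hin with h' | h'
      · exact hmemN x h' z hadj
      · exact hmemΩ z h'
    have h0 := hzero x hxs z hzs
    rw [he] at h0
    simp only at h0
    rw [if_pos ⟨hadj, hin⟩] at h0
    by_contra hne
    have hab : g z - g x ≠ h z - h x := by
      intro hq
      apply hne
      have : f z - f x = (g z - g x) - (h z - h x) := by simp [hf]; ring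
      have : f z - f x = 0 := by rw [this, hq, sub_self]
      linarith
    have hpos' := phi_mono_prod_pos hp hab
    have hfab : f z - f x = (g z - g x) - (h z - h x) := by simp [hf]; ring
    rw [hfab, mul_assoc] at h0
    exact absurd h0 (mul_pos (hwpos x z hadj) hpos').ne'
  have hconst : ∀ x z, G.Adj x z → f x = f z := by
    intro x z hadj
    by_cases hx : x ∈ Ω
    · exact hedge x z hadj (Or.inl hx)
    by_cases hz : z ∈ Ω
    · exact hedge x z hadj (Or.inr hz)
    · simp [hf, hg.1 x hx, hh.1 x hx, hg.1 z hz, hh.1 z hz]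
  have hwalkconst : ∀ x z : V, f x = f z := by
    intro x z
    obtain ⟨wk⟩ := hconn.preconnected x z
    induction wk with
    | nil => rfl
    | cons ha _ ih => exact (hconst _ _ ha).trans ih
  obtain ⟨x₀, hx₀⟩ := hΩ.infinite_compl.nonempty
  have hf0 : ∀ x, f x = 0 := fun x =>
    (hwalkconst x x₀).trans (by simp [hf, hg.1 x₀ hx₀, hh.1 x₀ hx₀])
  funext x
  have := hf0 x
  simp only [hf] at this
  linarith
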